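/- arXiv:2204.13305 — 2 statements merged into one kernel-verified Lean document; each statement's English description precedes it below -/
import Mathlib

section
/- Let F be a PCAF and C a set of claims. Then C ∈ com_p^3(F) if and only if claim(E_*^3(C)) = C and E_*^3(C) is a complete extension of Red_3(F). In particular, if claim(E_*^3(C)) = C but E_*^3(C) is not complete in Red_3(F), then no complete extension S of Red_3(F) satisfies claim(S) = C. -/
/-- A claim-augmented argumentation framework (CAF): a finite set of arguments,
an attack relation between the arguments, and a claim function assigning
a claim to each argument.  Arguments and claims are drawn from `ℕ`. -/
structure CAF where
  args : Finset ℕ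
  att : Set (ℕ × ℕ)
  claim : ℕ → ℕ
  att_dom : ∀ p ∈ att, p.1 ∈ args ∧ p.2 ∈ args

namespace CAF

/-- A CAF is well-formed if arguments with the same claim attack the same arguments. -/
def wf (F : CAF) : Prop :=
  ∀ a ∈ F.args, ∀ b ∈ F.args, F.claim a = F.claim b →
    ∀ c, ((a, c) ∈ F.att ↔ (b, c) ∈ F.att)

/-- `S` attacks the argument `b` in `F`. -/
def attacks (F : CAF) (S : Set ℕ) (b : ℕ) : Prop := ∃ a ∈ S, (a, b) ∈ F.att

/-- The argument `a` is defended by `S` in `F`. -/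
def defends (F : CAF) (S : Set ℕ) (a : ℕ) : Prop :=
  ∀ b, (b, a) ∈ F.att → F.attacks S b

/-- The range `S⊕` of `S` in `F`. -/
def range (F : CAF) (S : Set ℕ) : Set ℕ := S ∪ {b | F.attacks S b}

/-- Conflict-free sets. -/
def cf (F : CAF) (S : Set ℕ) : Prop :=
  S ⊆ ↑F.args ∧ ∀ a ∈ S, ∀ b ∈ S, (a, b) ∉ F.att

/-- Admissible sets. -/
def adm (F : CAF) (S : Set ℕ) : Prop :=
  F.cf S ∧ ∀ a ∈ S, F.defends S a

/-- Complete extensions. -/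
def com (F : CAF) (S : Set ℕ) : Prop :=
  F.adm S ∧ ∀ a ∈ F.args, F.defends S a → a ∈ S

/-- Naive extensions: ⊆-maximal conflict-free sets. -/
def naive (F : CAF) (S : Set ℕ) : Prop :=
  F.cf S ∧ ¬ ∃ T, F.cf T ∧ S ⊂ T

/-- Stable extensions. -/
def stb (F : CAF) (S : Set ℕ) : Prop :=
  F.cf S ∧ ∀ a ∈ F.args, a ∉ S → F.attacks S a

/-- Preferred extensions: ⊆-maximal admissible sets. -/
def prf (F : CAF) (S : Set ℕ) : Prop :=
  F.adm S ∧ ¬ ∃ T, F.adm T ∧ S ⊂ T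

/-- Semi-stable extensions: admissible sets with ⊆-maximal range among admissible sets. -/
def sem (F : CAF) (S : Set ℕ) : Prop :=
  F.adm S ∧ ¬ ∃ T, F.adm T ∧ F.range S ⊂ F.range T

/-- Stage extensions: conflict-free sets with ⊆-maximal range among conflict-free sets. -/
def stg (F : CAF) (S : Set ℕ) : Prop :=
  F.cf S ∧ ¬ ∃ T, F.cf T ∧ F.range S ⊂ F.range T

/-- The claim-based variant `σ_c` of a semantics `σ`. -/
def claimSem (σ : CAF → Set ℕ → Prop) (F : CAF) : Set (Set ℕ) :=
  {C | ∃ S, σ F S ∧ F.claim '' S = C}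

/-- The wf-problematic part of a CAF: the pairs of arguments `(a,b)` such that
`(a,b)` is not an attack but some argument `a'` with the same claim as `a` attacks `b`. -/
def wfp (F : CAF) : Set (ℕ × ℕ) :=
  {p | p.1 ∈ F.args ∧ p.2 ∈ F.args ∧ p ∉ F.att ∧
       ∃ a' ∈ F.args, F.claim a' = F.claim p.1 ∧ (a', p.2) ∈ F.att}

end CAF

/-- A preference-based CAF (PCAF): a well-formed CAF together with an
asymmetric preference relation over its arguments. -/
structure PCAF extends CAF where
  pref : ℕ → ℕ → Prop
  pref_dom : ∀ a b, pref a b → a ∈ args ∧ b ∈ args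
  pref_asymm : ∀ a b, pref a b → ¬ pref b a
  isWf : toCAF.wf

/-- The attack relation obtained from a PCAF by Reduction `i` (`i ∈ {1,2,3,4}`). -/
def redAtt (i : ℕ) (F : PCAF) : Set (ℕ × ℕ) :=
  if i = 1 then {p | p ∈ F.att ∧ ¬ F.pref p.2 p.1}
  else if i = 2 then
    {p | (p ∈ F.att ∧ ¬ F.pref p.2 p.1) ∨
         ((p.2, p.1) ∈ F.att ∧ p ∉ F.att ∧ F.pref p.1 p.2)}
  else if i = 3 then
    {p | (p ∈ F.att ∧ ¬ F.pref p.2 p.1) ∨ (p ∈ F.att ∧ (p.2, p.1) ∉ F.att)}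
  else if i = 4 then
    {p | (p ∈ F.att ∧ ¬ F.pref p.2 p.1) ∨
         ((p.2, p.1) ∈ F.att ∧ p ∉ F.att ∧ F.pref p.1 p.2) ∨
         (p ∈ F.att ∧ (p.2, p.1) ∉ F.att)}
  else ∅

/-- The CAF `Red_i(F)` obtained from the PCAF `F` by Reduction `i`. -/
def Red (i : ℕ) (F : PCAF) : CAF where
  args := F.args
  att := redAtt i F
  claim := F.claim
  att_dom := by
    intro p hp
    unfold redAtt at hp
    split_ifs at hp
    · simp only [Set.mem_setOf_eq] at hp
      exact F.att_dom p hp.1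
    · simp only [Set.mem_setOf_eq] at hp
      rcases hp with ⟨h, -⟩ | ⟨h, -, -⟩
      · exact F.att_dom p h
      · exact ⟨(F.att_dom _ h).2, (F.att_dom _ h).1⟩
    · simp only [Set.mem_setOf_eq] at hp
      rcases hp with ⟨h, -⟩ | ⟨h, -⟩ <;> exact F.att_dom p h
    · simp only [Set.mem_setOf_eq] at hp
      rcases hp with ⟨h, -⟩ | ⟨h, -, -⟩ | ⟨h, -⟩
      · exact F.att_dom p h
      · exact ⟨(F.att_dom _ h).2, (F.att_dom _ h).1⟩
      · exact F.att_dom p h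
    · exact absurd hp (Set.notMem_empty p)

/-- `Image_i`: the class of CAFs obtainable by applying Reduction `i` to a PCAF. -/
def ImageI (i : ℕ) : Set CAF := {F | ∃ G : PCAF, Red i G = F}

/-- `ImageTrans_i`: the class of CAFs obtainable by applying Reduction `i`
to a PCAF with a transitive preference relation. -/
def ImageTransI (i : ℕ) : Set CAF :=
  {F | ∃ G : PCAF, Transitive G.pref ∧ Red i G = F}

/-- The class of well-formed CAFs. -/
def wfCAFs : Set CAF := {F | F.wf}

/-- The preference-claim-based variant `σ_p^i` of a semantics `σ`. -/
def prefSem (σ : CAF → Set ℕ → Prop) (i : ℕ) (F : PCAF) : Set (Set ℕ) :=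
  CAF.claimSem σ (Red i F)

/-- `E_0(C)`: all arguments of `F` with a claim in `C`. -/
def E0 (F : PCAF) (C : Set ℕ) : Set ℕ := {a | a ∈ F.args ∧ F.claim a ∈ C}

/-- `E_1^i(C)`: the arguments of `E_0(C)` not attacked by `E_0(C)` in the
underlying AF of `F` (this set does not depend on `i`). -/
def E1 (F : PCAF) (C : Set ℕ) : Set ℕ :=
  E0 F C \ {b | ∃ a ∈ E0 F C, (a, b) ∈ F.att}

/-- The sequence `E_k^i(C)`. -/
def Ek (F : PCAF) (i : ℕ) (C : Set ℕ) : ℕ → Set ℕ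
  | 0 => E0 F C
  | 1 => E1 F C
  | (k + 2) => {x | x ∈ Ek F i C (k + 1) ∧ (Red i F).defends (Ek F i C (k + 1)) x}

/-- `E_*^i(C)`: the fixed point of the sequence `E_k^i(C)` (reached after at
most `|A|` steps, since the sequence is ⊆-decreasing from index 1 on). -/
def Estar (F : PCAF) (i : ℕ) (C : Set ℕ) : Set ℕ := Ek F i C (F.args.card + 2)

/-!
Let `S` be a complete extension of `Red_3(F)` with `claim(S) = C`. Every attack of `F` survives
in `Red_3(F)` in at least one direction, and by well-formedness an argument with a claim in `C`
attacks exactly what a member of `S` with the same claim attacks; so by admissibility `S` counters,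
in `Red_3(F)`, every attack launched by an argument with a claim in `C`. Hence `S ⊆ E_1(C)`, and
since the steps `E_k → E_{k+1}` only discard arguments their set does not defend, `S ⊆ E_*^3(C)`,
so `claim(E_*^3(C)) = C`. The same transfer shows that `S` defends whatever `E_*^3(C)` defends, so
`E_*^3(C)` contains all it defends; it is conflict-free inside `E_1(C)` and self-defending because
the decreasing sequence `E_k^3(C)` is stationary after `|A|` steps.
-/

namespace Set

variable {α : Type*} {g : Set α → Set α}

theorem iterate_subset_of_deflationary (hg : ∀ X, g X ⊆ X) (X : Set α) :
    ∀ k, g^[k] X ⊆ X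
  | 0 => subset_rfl
  | k + 1 => by
    rw [Function.iterate_succ_apply']
    exact (hg _).trans (iterate_subset_of_deflationary hg X k)

theorem exists_iterate_fixed_of_deflationary (hg : ∀ X, g X ⊆ X) {X : Set α}
    (hX : X.Finite) : ∃ k ≤ X.ncard, g (g^[k] X) = g^[k] X := by
  by_contra! hstrict
  have hcard : ∀ k ≤ X.ncard + 1, (g^[k] X).ncard + k ≤ X.ncard := by
    intro k
    induction k with
    | zero => simp
    | succ k ih =>
      intro hk
      have hssub : g (g^[k] X) ⊂ g^[k] X := (hg _).ssubset_of_ne (hstrict k (by omega))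
      have hlt := ncard_lt_ncard hssub (hX.subset (iterate_subset_of_deflationary hg X k))
      rw [Function.iterate_succ_apply']
      have := ih (by omega)
      omega
  have := hcard (X.ncard + 1) le_rfl
  omega

theorem iterate_fixed_of_deflationary (hg : ∀ X, g X ⊆ X) {X : Set α} (hX : X.Finite)
    {n : ℕ} (hn : X.ncard ≤ n) : g (g^[n] X) = g^[n] X := by
  obtain ⟨k, hk, hfix⟩ := exists_iterate_fixed_of_deflationary hg hX
  obtain ⟨m, rfl⟩ := Nat.exists_eq_add_of_le (hk.trans hn)
  rw [Nat.add_comm, Function.iterate_add_apply, Function.iterate_fixed hfix, hfix]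

end Set

namespace CAF

variable (G : CAF)

def defendedPart (X : Set ℕ) : Set ℕ := {x | x ∈ X ∧ G.defends X x}

variable {G}

theorem defendedPart_subset (X : Set ℕ) : G.defendedPart X ⊆ X := fun _ hx => hx.1

theorem cf.mono {S T : Set ℕ} (hT : G.cf T) (hST : S ⊆ T) : G.cf S :=
  ⟨hST.trans hT.1, fun a ha b hb => hT.2 a (hST ha) b (hST hb)⟩

theorem defends_mono {S T : Set ℕ} (hST : S ⊆ T) {a : ℕ} (ha : G.defends S a) :
    G.defends T a := fun b hb =>
  let ⟨c, hc, hcb⟩ := ha b hb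
  ⟨c, hST hc, hcb⟩

theorem adm.subset_iterate_defendedPart {S X : Set ℕ} (hS : G.adm S) (hSX : S ⊆ X) :
    ∀ k, S ⊆ G.defendedPart^[k] X
  | 0 => hSX
  | k + 1 => by
    rw [Function.iterate_succ_apply']
    exact fun a ha => ⟨hS.subset_iterate_defendedPart hSX k ha,
      defends_mono (hS.subset_iterate_defendedPart hSX k) (hS.2 a ha)⟩

end CAF

section Ek

variable (F : PCAF) (i : ℕ) (C : Set ℕ)

theorem Ek_succ_eq_iterate : ∀ k, Ek F i C (k + 1) = (Red i F).defendedPart^[k] (E1 F C)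
  | 0 => rfl
  | k + 1 => by
    rw [Function.iterate_succ_apply', ← Ek_succ_eq_iterate k]
    rfl

theorem E1_subset_args : E1 F C ⊆ F.args := fun _ hx => hx.1.1

theorem Estar_subset_E1 : Estar F i C ⊆ E1 F C := by
  rw [Estar, Ek_succ_eq_iterate]
  exact Set.iterate_subset_of_deflationary CAF.defendedPart_subset _ _

theorem defendedPart_Estar : (Red i F).defendedPart (Estar F i C) = Estar F i C := by
  have hfin : (E1 F C).Finite := F.args.finite_toSet.subset (E1_subset_args F C)
  have hcard : (E1 F C).ncard ≤ F.args.card + 1 := by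
    have := Set.ncard_le_ncard (E1_subset_args F C) F.args.finite_toSet
    rw [Set.ncard_coe_finset] at this
    omega
  rw [Estar, Ek_succ_eq_iterate]
  exact Set.iterate_fixed_of_deflationary CAF.defendedPart_subset hfin hcard

theorem defends_Estar_of_mem {x : ℕ} (hx : x ∈ Estar F i C) :
    (Red i F).defends (Estar F i C) x := by
  rw [← defendedPart_Estar] at hx
  exact hx.2

end Ek

namespace PCAF

variable (F : PCAF) {a b : ℕ}

theorem mem_red3_att_iff :
    (a, b) ∈ (Red 3 F).att ↔
      ((a, b) ∈ F.att ∧ ¬ F.pref b a) ∨ ((a, b) ∈ F.att ∧ (b, a) ∉ F.att) := by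
  simp [Red, redAtt]

theorem red3_att_subset : (Red 3 F).att ⊆ F.att := by
  rintro ⟨a, b⟩ h
  rcases F.mem_red3_att_iff.mp h with ⟨h, -⟩ | ⟨h, -⟩ <;> exact h

theorem red3_att_or_att_swap (h : (a, b) ∈ F.att) :
    (a, b) ∈ (Red 3 F).att ∨ (b, a) ∈ (Red 3 F).att := by
  by_cases hba : (b, a) ∈ F.att
  · by_cases hpref : F.pref b a
    · exact Or.inr (F.mem_red3_att_iff.mpr (Or.inl ⟨hba, F.pref_asymm b a hpref⟩))
    · exact Or.inl (F.mem_red3_att_iff.mpr (Or.inl ⟨h, hpref⟩))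
  · exact Or.inl (F.mem_red3_att_iff.mpr (Or.inr ⟨h, hba⟩))

variable {F} {S : Set ℕ} {C : Set ℕ}

theorem red3_attacks_of_claim_mem (hS : (Red 3 F).adm S) {c : ℕ} (hc : c ∈ F.args)
    (hcS : F.claim c ∈ F.claim '' S) (hcb : (c, b) ∈ F.att) : (Red 3 F).attacks S b := by
  obtain ⟨c', hc'S, hclaim⟩ := hcS
  have hc'b : (c', b) ∈ F.att := (F.isWf c' (hS.1.1 hc'S) c hc hclaim b).mpr hcb
  rcases F.red3_att_or_att_swap hc'b with h | h
  · exact ⟨c', hc'S, h⟩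
  · exact hS.2 c' hc'S b h

theorem subset_E1_of_red3_adm (hS : (Red 3 F).adm S) (hC : F.claim '' S = C) :
    S ⊆ E1 F C := by
  have hE0 : S ⊆ E0 F C := fun a ha => ⟨hS.1.1 ha, hC ▸ Set.mem_image_of_mem _ ha⟩
  refine fun a ha => ⟨hE0 ha, ?_⟩
  rintro ⟨b, hb, hba⟩
  obtain ⟨c, hc, hca⟩ := red3_attacks_of_claim_mem hS hb.1 (hC ▸ hb.2) hba
  exact hS.1.2 c hc a ha hca

theorem subset_Estar_of_red3_adm (hS : (Red 3 F).adm S) (hC : F.claim '' S = C) :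
    S ⊆ Estar F 3 C := by
  rw [Estar, Ek_succ_eq_iterate]
  exact hS.subset_iterate_defendedPart (subset_E1_of_red3_adm hS hC) _

theorem claim_image_Estar_of_red3_adm (hS : (Red 3 F).adm S) (hC : F.claim '' S = C) :
    F.claim '' Estar F 3 C = C := by
  refine (Set.image_subset_iff.mpr fun x hx => (Estar_subset_E1 F 3 C hx).1.2).antisymm ?_
  calc C = F.claim '' S := hC.symm
    _ ⊆ F.claim '' Estar F 3 C := Set.image_mono (subset_Estar_of_red3_adm hS hC)

theorem red3_cf_E1 : (Red 3 F).cf (E1 F C) :=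
  ⟨E1_subset_args F C, fun a ha _ hb hab => hb.2 ⟨a, ha.1, F.red3_att_subset hab⟩⟩

theorem red3_com_Estar_of_com (hS : (Red 3 F).com S) (hC : F.claim '' S = C) :
    (Red 3 F).com (Estar F 3 C) := by
  have hsub := Estar_subset_E1 F 3 C
  refine ⟨⟨red3_cf_E1.mono hsub, fun x hx => defends_Estar_of_mem F 3 C hx⟩, fun a ha hdef => ?_⟩
  have hdefS : (Red 3 F).defends S a := fun b hb => by
    obtain ⟨c, hc, hcb⟩ := hdef b hb
    have hcE0 := (hsub hc).1
    exact red3_attacks_of_claim_mem hS.1 hcE0.1 (hC ▸ hcE0.2) (F.red3_att_subset hcb)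
  exact subset_Estar_of_red3_adm hS.1 hC (hS.2 a ha hdefS)

end PCAF

/-- `C ∈ com_p^3(F)` iff `claim(E_*^3(C)) = C` and `E_*^3(C)` is a complete
extension of `Red_3(F)`.  In particular, if `claim(E_*^3(C)) = C` but `E_*^3(C)`
is not complete in `Red_3(F)`, then no complete extension `S` of `Red_3(F)`
satisfies `claim(S) = C`. -/
theorem stmt_18 (F : PCAF) (C : Set ℕ) :
    (C ∈ prefSem CAF.com 3 F ↔
      (F.claim '' Estar F 3 C = C ∧ (Red 3 F).com (Estar F 3 C))) ∧
    ((F.claim '' Estar F 3 C = C ∧ ¬ (Red 3 F).com (Estar F 3 C)) →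
      ∀ S : Set ℕ, (Red 3 F).com S → F.claim '' S ≠ C) := by
  have of_com : ∀ S, (Red 3 F).com S → F.claim '' S = C →
      F.claim '' Estar F 3 C = C ∧ (Red 3 F).com (Estar F 3 C) := fun S hS hC =>
    ⟨PCAF.claim_image_Estar_of_red3_adm hS.1 hC, PCAF.red3_com_Estar_of_com hS hC⟩
  refine ⟨⟨fun ⟨S, hS, hC⟩ => of_com S hS hC, fun ⟨hC, hcom⟩ => ⟨Estar F 3 C, hcom, hC⟩⟩, ?_⟩
  rintro ⟨-, hnot⟩ S hS hC
  exact hnot (of_com S hS hC).2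
end

section
/- Let F be a PCAF, C a set of claims, and i ∈ {2,3,4}. Then C ∈ stg_p^i(F) if and only if claim(E_1^i(C)) = C and E_1^i(C) is a stage extension of Red_i(F). In particular, if claim(E_1^i(C)) = C but E_1^i(C) is not a stage extension of Red_i(F), then no stage extension S of Red_i(F) satisfies claim(S) = C. -/
/-!
Every reduction with `i ∈ {2,3,4}` keeps each attack of `F` in at least one direction and adds
no attack between arguments that were unrelated, so `Red_i(F)` and `F` have the same
conflict-free sets. By well-formedness a conflict-free `S` contains no argument attacked by an
argument with a claim of `S`, hence `S ⊆ E_1(claim(S))`. The set `E_1(claim(S))` is itself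
conflict-free with the same claims, and its range contains that of `S`; if `S` is stage, so is
`E_1(claim(S))`.
-/

namespace CAF

variable (G : CAF)

lemma range_mono {S T : Set ℕ} (h : S ⊆ T) : G.range S ⊆ G.range T := by
  rintro x (hx | ⟨a, ha, hax⟩)
  · exact Or.inl (h hx)
  · exact Or.inr ⟨a, h ha, hax⟩

lemma stg_of_subset {S T : Set ℕ} (hS : G.stg S) (hT : G.cf T) (hST : S ⊆ T) : G.stg T := by
  have hrange : G.range S = G.range T := by
    by_contra hne
    exact hS.2 ⟨T, hT, (G.range_mono hST).ssubset_of_ne hne⟩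
  refine ⟨hT, ?_⟩
  rintro ⟨U, hU, hlt⟩
  exact hS.2 ⟨U, hU, hrange ▸ hlt⟩

lemma notMem_att_of_cf {S : Set ℕ} (hwf : G.wf) (hS : G.cf S) {a b : ℕ} (ha : a ∈ G.args)
    (hclaim : G.claim a ∈ G.claim '' S) (hb : b ∈ S) : (a, b) ∉ G.att := by
  obtain ⟨a', ha', hclaim'⟩ := hclaim
  rw [hwf a ha a' (hS.1 ha') hclaim'.symm b]
  exact hS.2 a' ha' b hb

end CAF

namespace PCAF

variable (F : PCAF)

lemma mem_att_or_swap_of_mem_redAtt (i : ℕ) {p : ℕ × ℕ} (hp : p ∈ redAtt i F) :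
    p ∈ F.att ∨ p.swap ∈ F.att := by
  unfold redAtt at hp
  split_ifs at hp <;> simp only [Set.mem_ofPred_eq, Set.mem_empty_iff_false] at hp <;> tauto

lemma mem_redAtt_or_swap_of_mem_att {i : ℕ} (hi : i ∈ ({2, 3, 4} : Set ℕ)) {p : ℕ × ℕ}
    (hp : p ∈ F.att) : p ∈ redAtt i F ∨ p.swap ∈ redAtt i F := by
  have hasymm := F.pref_asymm p.2 p.1
  rcases hi with rfl | rfl | rfl <;> simp [redAtt] <;> tauto

lemma red_cf_iff {i : ℕ} (hi : i ∈ ({2, 3, 4} : Set ℕ)) {S : Set ℕ} :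
    (Red i F).cf S ↔ F.cf S := by
  refine and_congr_right fun _ => ⟨fun h a ha b hb hab => ?_, fun h a ha b hb hab => ?_⟩
  · rcases F.mem_redAtt_or_swap_of_mem_att hi hab with hab' | hba
    exacts [h a ha b hb hab', h b hb a ha hba]
  · rcases F.mem_att_or_swap_of_mem_redAtt i hab with hab' | hba
    exacts [h a ha b hb hab', h b hb a ha hba]

lemma cf_E1 (C : Set ℕ) : F.cf (E1 F C) :=
  ⟨fun _ hx => hx.1.1, fun a ha _ hb hab => hb.2 ⟨a, ha.1, hab⟩⟩

lemma image_claim_E1_subset (C : Set ℕ) : F.claim '' E1 F C ⊆ C := by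
  rintro _ ⟨a, ha, rfl⟩
  exact ha.1.2

lemma subset_E1_image_claim {S : Set ℕ} (hS : F.cf S) : S ⊆ E1 F (F.claim '' S) := by
  intro b hb
  refine ⟨⟨hS.1 hb, b, hb, rfl⟩, ?_⟩
  rintro ⟨a, ⟨ha, hclaim⟩, hab⟩
  exact F.notMem_att_of_cf F.isWf hS ha hclaim hb hab

lemma stg_E1_of_stg {i : ℕ} (hi : i ∈ ({2, 3, 4} : Set ℕ)) {S : Set ℕ} (hS : (Red i F).stg S) :
    F.claim '' E1 F (F.claim '' S) = F.claim '' S ∧ (Red i F).stg (E1 F (F.claim '' S)) := by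
  have hsub := F.subset_E1_image_claim ((F.red_cf_iff hi).1 hS.1)
  refine ⟨(F.image_claim_E1_subset _).antisymm (Set.image_mono hsub), ?_⟩
  exact (Red i F).stg_of_subset hS ((F.red_cf_iff hi).2 (F.cf_E1 _)) hsub

end PCAF

/-- For `i ∈ {2,3,4}`: `C ∈ stg_p^i(F)` iff `claim(E_1^i(C)) = C` and `E_1^i(C)`
is a stage extension of `Red_i(F)`.  In particular, if `claim(E_1^i(C)) = C` but
`E_1^i(C)` is not a stage extension of `Red_i(F)`, then no stage extension `S` of
`Red_i(F)` satisfies `claim(S) = C`. -/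
theorem stmt_19 (F : PCAF) (C : Set ℕ) :
    ∀ i ∈ ({2, 3, 4} : Set ℕ),
      (C ∈ prefSem CAF.stg i F ↔
        (F.claim '' E1 F C = C ∧ (Red i F).stg (E1 F C))) ∧
      ((F.claim '' E1 F C = C ∧ ¬ (Red i F).stg (E1 F C)) →
        ∀ S : Set ℕ, (Red i F).stg S → F.claim '' S ≠ C) := by
  intro i hi
  refine ⟨⟨?_, fun ⟨hclaim, hstg⟩ => ⟨E1 F C, hstg, hclaim⟩⟩, ?_⟩
  · rintro ⟨S, hS, rfl⟩
    exact F.stg_E1_of_stg hi hS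
  · rintro ⟨-, hnot⟩ S hS rfl
    exact hnot (F.stg_E1_of_stg hi hS).2
end
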